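/- arXiv:1909.05161 — 2 statements merged into one kernel-verified Lean document; each statement's English description precedes it below -/
import Mathlib

section
/- Let H = H^{-1}(O) be the dual of H^1_0(O) for a bounded open interval O ⊂ ℝ, with the partial order: u ≤ v iff u(η) ≤ v(η) for all η ∈ H^1_0 with η ≥ 0 a.e. If u, v, w ∈ H^{-1} satisfy u ≤ v ≤ w, then ‖v‖_{H^{-1}} ≤ ‖u‖_{H^{-1}} + ‖w‖_{H^{-1}}. -/
/-- Sandwich lemma for the dual space of an ordered space of test functions:
if `u ≤ v ≤ w` in the order defined by testing against nonnegative elements,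
then `‖v‖ ≤ ‖u‖ + ‖w‖`. -/
theorem dual_norm_sandwich {E : Type*} [NormedAddCommGroup E] [Lattice E] [HasSolidNorm E]
    [IsOrderedAddMonoid E] [NormedSpace ℝ E]
    (u v w : E →L[ℝ] ℝ)
    (huv : ∀ η : E, 0 ≤ η → u η ≤ v η)
    (hvw : ∀ η : E, 0 ≤ η → v η ≤ w η) :
    ‖v‖ ≤ ‖u‖ + ‖w‖ := by
  have key : ∀ η : E, v η ≤ (‖u‖ + ‖w‖) * ‖η‖ := by
    intro η
    have hp : (0:E) ≤ η⁺ := le_sup_right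
    have hn : (0:E) ≤ η⁻ := le_sup_right
    have hnp : ‖η⁺‖ ≤ ‖η‖ := norm_le_norm_of_abs_le_abs (by rw [abs_of_nonneg hp]; rw [← posPart_add_negPart η]; exact le_add_of_nonneg_right hn)
    have hnn : ‖η⁻‖ ≤ ‖η‖ := norm_le_norm_of_abs_le_abs (by rw [abs_of_nonneg hn]; rw [← posPart_add_negPart η]; exact le_add_of_nonneg_left hp)
    have hsplit : η = η⁺ - η⁻ := (posPart_sub_negPart η).symm
    calc v η = v η⁺ - v η⁻ := by conv_lhs => rw [hsplit, map_sub]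
    _ ≤ w η⁺ - u η⁻ := sub_le_sub (hvw _ hp) (huv _ hn)
    _ ≤ ‖w‖ * ‖η⁺‖ + ‖u‖ * ‖η⁻‖ := by
        have h1 : w η⁺ ≤ ‖w‖ * ‖η⁺‖ := le_trans (le_abs_self _) (w.le_opNorm _)
        have h2 : -(u η⁻) ≤ ‖u‖ * ‖η⁻‖ := le_trans (neg_le_abs _) (u.le_opNorm _)
        linarith
    _ ≤ (‖u‖ + ‖w‖) * ‖η‖ := by
        have := u.opNorm_nonneg; have := w.opNorm_nonneg
        nlinarith
  refine v.opNorm_le_bound (by positivity) fun η => ?_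
  rcases abs_cases (v η) with ⟨h, _⟩ | ⟨h, _⟩
  · rw [Real.norm_eq_abs, h]; exact key η
  · rw [Real.norm_eq_abs, h]
    have := key (-η)
    simpa using this
end

section
/- Let H = H^{-1}((−1,1)) and let g ∈ L²((−1,1)) with g > 1 almost everywhere. Set v = (−Δ)^{-1} g ∈ H^1_0, where −Δ has zero Dirichlet boundary conditions. Then v > 0 almost everywhere, u_∞ := v ∨ 1 belongs to L¹ ∩ H^{-1}, v(x) ∈ φ(u_∞(x)) for a.e. x (where φ is the maximal monotone extension of x ↦ x·1_{|x|>1}), and hence g ∈ ∂φ̃(u_∞) where ∂φ̃ = {[u,w] : w = −Δv', v' ∈ H^1_0, v'(x) ∈ φ(u(x)) a.e.}. -/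
open MeasureTheory

/-- The maximal monotone extension of `x ↦ x·1_{|x|>1}`. -/
noncomputable def phiSet (x : ℝ) : Set ℝ :=
  if x = 1 then Set.Icc 0 1
  else if x = -1 then Set.Icc (-1) 0
  else if |x| < 1 then {0}
  else {x}

/-- Lebesgue measure restricted to `O = (−1,1)`. -/
noncomputable def muO : Measure ℝ := volume.restrict (Set.Ioo (-1 : ℝ) 1)

/-- Let `g ∈ L²((−1,1))` with `g > 1` a.e. and let `v = (−Δ)⁻¹ g` (i.e. `v ∈ H¹₀` with
`−v'' = g`, encoded by `v` having derivative `dv` with `dv(x) = dv(0) − ∫₀ˣ g`).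
Then `v > 0` a.e., `u_∞ := v ∨ 1` lies in `L¹ ∩ H⁻¹` (indeed in `L²`),
`v(x) ∈ φ(u_∞(x))` a.e., and hence `g ∈ ∂φ̃(u_∞)`. -/
theorem limit_state_subdifferential
    (g v dv : ℝ → ℝ)
    (hg : MemLp g 2 muO) (hg1 : ∀ᵐ x ∂muO, 1 < g x)
    (hvcont : ContinuousOn v (Set.Icc (-1 : ℝ) 1))
    (hvbd₁ : v (-1) = 0) (hvbd₂ : v 1 = 0)
    (hderiv : ∀ x ∈ Set.Ioo (-1 : ℝ) 1, HasDerivAt v (dv x) x)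
    (hlap : ∀ x ∈ Set.Ioo (-1 : ℝ) 1, dv x = dv 0 - ∫ t in (0 : ℝ)..x, g t) :
    (∀ᵐ x ∂muO, 0 < v x) ∧
    IntegrableOn (fun x => max (v x) 1) (Set.Ioo (-1 : ℝ) 1) ∧
    MemLp (fun x => max (v x) 1) 2 muO ∧
    (∀ᵐ x ∂muO, v x ∈ phiSet (max (v x) 1)) ∧
    (∃ v' dv' : ℝ → ℝ,
      ContinuousOn v' (Set.Icc (-1 : ℝ) 1) ∧ v' (-1) = 0 ∧ v' 1 = 0 ∧
      (∀ x ∈ Set.Ioo (-1 : ℝ) 1, HasDerivAt v' (dv' x) x) ∧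
      (∀ x ∈ Set.Ioo (-1 : ℝ) 1, dv' x = dv' 0 - ∫ t in (0 : ℝ)..x, g t) ∧
      (∀ᵐ x ∂muO, v' x ∈ phiSet (max (v x) 1))) := by
  have hmu : muO = volume.restrict (Set.Ioo (-1 : ℝ) 1) := rfl
  haveI : IsFiniteMeasure muO := by
    rw [hmu]
    refine ⟨?_⟩
    rw [Measure.restrict_apply_univ, Real.volume_Ioo]
    norm_num
  -- integrability of g
  have hgint : IntegrableOn g (Set.Ioo (-1 : ℝ) 1) := hg.integrable one_le_two
  have hsub : ∀ a b : ℝ, a ∈ Set.Ioo (-1 : ℝ) 1 → b ∈ Set.Ioo (-1 : ℝ) 1 →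
      Set.uIoc a b ⊆ Set.Ioo (-1 : ℝ) 1 := by
    intro a b ha hb x hx
    exact ⟨(lt_min ha.1 hb.1).trans hx.1, hx.2.trans_lt (max_lt ha.2 hb.2)⟩
  have hiint : ∀ a b : ℝ, a ∈ Set.Ioo (-1 : ℝ) 1 → b ∈ Set.Ioo (-1 : ℝ) 1 →
      IntervalIntegrable g volume a b := by
    intro a b ha hb
    rw [intervalIntegrable_iff]
    exact hgint.mono_set (hsub a b ha hb)
  have h0mem : (0 : ℝ) ∈ Set.Ioo (-1 : ℝ) 1 := by norm_num
  -- dv a - dv b = ∫ a..b g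
  have hdiff : ∀ a b : ℝ, a ∈ Set.Ioo (-1 : ℝ) 1 → b ∈ Set.Ioo (-1 : ℝ) 1 →
      dv a - dv b = ∫ t in a..b, g t := by
    intro a b ha hb
    rw [hlap a ha, hlap b hb]
    have := intervalIntegral.integral_add_adjacent_intervals
      (hiint 0 a h0mem ha) (hiint a b ha hb)
    linarith
  -- dv strictly decreasing
  have hmono : ∀ a b : ℝ, a ∈ Set.Ioo (-1 : ℝ) 1 → b ∈ Set.Ioo (-1 : ℝ) 1 →
      a < b → dv b < dv a := by
    intro a b ha hb hab
    have hIcc : Set.Icc a b ⊆ Set.Ioo (-1 : ℝ) 1 :=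
      fun x hx => ⟨ha.1.trans_le hx.1, hx.2.trans_lt hb.2⟩
    have hle : (fun _ => (1 : ℝ)) ≤ᵐ[volume.restrict (Set.Icc a b)] g := by
      have h1' : ∀ᵐ x ∂(volume.restrict (Set.Icc a b)), 1 < g x :=
        ae_mono (Measure.restrict_mono hIcc le_rfl) hg1
      exact h1'.mono fun x hx => hx.le
    have h1 : (∫ t in a..b, (1 : ℝ)) ≤ ∫ t in a..b, g t :=
      intervalIntegral.integral_mono_ae_restrict hab.le
        intervalIntegrable_const (hiint a b ha hb) hle
    have h2 : dv a - dv b = ∫ t in a..b, g t := hdiff a b ha hb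
    simp only [intervalIntegral.integral_const, smul_eq_mul, mul_one] at h1
    linarith
  -- pointwise positivity on the open interval
  have hpos : ∀ x ∈ Set.Ioo (-1 : ℝ) 1, 0 < v x := by
    intro x hx
    by_contra hle
    push_neg at hle
    -- MVT on [-1, x]
    obtain ⟨a, ha, hda⟩ := exists_hasDerivAt_eq_slope v dv (by linarith [hx.1] : (-1:ℝ) < x)
      (hvcont.mono (Set.Icc_subset_Icc le_rfl hx.2.le))
      (fun y hy => hderiv y ⟨hy.1, hy.2.trans hx.2⟩)
    obtain ⟨b, hb, hdb⟩ := exists_hasDerivAt_eq_slope v dv (hx.2 : x < 1)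
      (hvcont.mono (Set.Icc_subset_Icc hx.1.le le_rfl))
      (fun y hy => hderiv y ⟨hx.1.trans hy.1, hy.2⟩)
    have haO : a ∈ Set.Ioo (-1 : ℝ) 1 := ⟨ha.1, ha.2.trans hx.2⟩
    have hbO : b ∈ Set.Ioo (-1 : ℝ) 1 := ⟨hx.1.trans hb.1, hb.2⟩
    have hda' : dv a ≤ 0 := by
      rw [hda, hvbd₁]
      apply div_nonpos_of_nonpos_of_nonneg <;> [linarith; linarith [hx.1]]
    have hdb' : 0 ≤ dv b := by
      rw [hdb, hvbd₂]
      apply div_nonneg <;> linarith [hx.2]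
    have := hmono a b haO hbO (ha.2.trans hb.1)
    linarith
  have haepos : ∀ᵐ x ∂muO, 0 < v x := by
    rw [hmu]
    exact (ae_restrict_mem measurableSet_Ioo).mono hpos
  -- boundedness of v
  obtain ⟨C, hC⟩ := (isCompact_Icc (a := (-1:ℝ)) (b := 1)).exists_bound_of_continuousOn hvcont
  -- measurability of max v 1 on the interval
  have hvmeas : AEStronglyMeasurable (fun x => max (v x) 1) muO := by
    rw [hmu]
    have hv : AEMeasurable v (volume.restrict (Set.Ioo (-1:ℝ) 1)) :=
      ((hvcont.mono Set.Ioo_subset_Icc_self).aestronglyMeasurable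
        measurableSet_Ioo).aemeasurable
    exact (hv.max aemeasurable_const).aestronglyMeasurable
  have hmax2 : MemLp (fun x => max (v x) 1) 2 muO := by
    refine MemLp.of_bound hvmeas (max C 1) ?_
    rw [hmu]
    refine (ae_restrict_mem measurableSet_Ioo).mono fun x hx => ?_
    have h1 : |v x| ≤ C := hC x (Set.Ioo_subset_Icc_self hx)
    rw [Real.norm_eq_abs, abs_le]
    constructor
    · have : -C ≤ v x := (abs_le.mp h1).1
      have : -(max C 1) ≤ v x := le_trans (by simp [neg_le_neg (le_max_left C 1)]) this
      exact le_trans this (le_max_left _ _)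
    · exact max_le ((abs_le.mp h1).2.trans (le_max_left C 1)) (le_max_right C 1)
  have hmax1 : IntegrableOn (fun x => max (v x) 1) (Set.Ioo (-1 : ℝ) 1) := by
    have := hmax2.integrable one_le_two
    rwa [hmu] at this
  -- membership in phiSet
  have hphi : ∀ᵐ x ∂muO, v x ∈ phiSet (max (v x) 1) := by
    rw [hmu]
    refine (ae_restrict_mem measurableSet_Ioo).mono fun x hx => ?_
    have hvx := hpos x hx
    unfold phiSet
    rcases lt_or_ge 1 (v x) with h | h
    · rw [max_eq_left h.le]
      rw [if_neg (by linarith), if_neg (by linarith), if_neg (by rw [abs_lt]; push_neg; intro; linarith)]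
      exact rfl
    · rw [max_eq_right h, if_pos rfl]
      exact ⟨hvx.le, h⟩
  exact ⟨haepos, hmax1, hmax2, hphi,
    v, dv, hvcont, hvbd₁, hvbd₂, hderiv, hlap, hphi⟩
end
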